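/- Let A be an algebra, R a reflexive compatible binary relation on A, and S a tolerance of A (a reflexive symmetric compatible relation). Then [R,S|1] is a congruence of A, i.e., a compatible equivalence relation. -/

import Mathlib

/-!
Write `D = {(z, w) : (x, x; z, w) ∈ M(R, S)}`, so that `[R, S | 1]` is the transitive closure
of `D`. A projection term shows that `D` is reflexive when `R` is, swapping the `S`-tuples shows
that `D` is symmetric when `S` is, and `M(R, S)` is closed under applying term operations, so `D`
is compatible. The transitive closure of a reflexive compatible relation is compatible, since
the arguments of an operation can be changed one at a time.
-/

open FirstOrder Language

universe u

/-- A binary relation on a structure `A` is compatible (admissible) if it is preserved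
by every operation (function symbol) of the language. -/
def Compatible (L : Language) {A : Type u} [L.Structure A] (R : A → A → Prop) : Prop :=
  ∀ (n : ℕ) (f : L.Functions n) (a b : Fin n → A),
    (∀ i, R (a i) (b i)) → R (Structure.funMap f a) (Structure.funMap f b)

/-- `(x, y; z, w) ∈ M(R, S)`: there is a term `t` and tuples `a R a'`, `b S b'` with
`x = t(a,b)`, `y = t(a,b')`, `z = t(a',b)`, `w = t(a',b')`. -/
def InM (L : Language) {A : Type u} [L.Structure A] (R S : A → A → Prop)
    (x y z w : A) : Prop :=
  ∃ (n m : ℕ) (t : L.Term (Fin n ⊕ Fin m)) (a a' : Fin n → A) (b b' : Fin m → A),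
    (∀ i, R (a i) (a' i)) ∧ (∀ j, S (b j) (b' j)) ∧
      x = t.realize (Sum.elim a b) ∧ y = t.realize (Sum.elim a b') ∧
      z = t.realize (Sum.elim a' b) ∧ w = t.realize (Sum.elim a' b')

/-- `[R, S | 1]`: the transitive closure of `{(z,w) : (x,x;z,w) ∈ M(R,S) for some x}`. -/
def comm1 (L : Language) {A : Type u} [L.Structure A] (R S : A → A → Prop) :
    A → A → Prop :=
  Relation.TransGen (fun z w => ∃ x, InM L R S x x z w)

/-- Relational composition. -/
def rcomp {A : Type u} (R S : A → A → Prop) : A → A → Prop :=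
  fun a c => ∃ b, R a b ∧ S b c

/-- Converse of a relation. -/
def rconv {A : Type u} (R : A → A → Prop) : A → A → Prop := fun a b => R b a

/-- Intersection of relations. -/
def rinter {A : Type u} (R S : A → A → Prop) : A → A → Prop := fun a b => R a b ∧ S a b

/-- A congruence: a compatible equivalence relation. -/
def IsCongruence (L : Language) {A : Type u} [L.Structure A] (θ : A → A → Prop) : Prop :=
  Equivalence θ ∧ Compatible L θ

/-- A tolerance: a reflexive symmetric compatible relation. -/
def IsTolerance (L : Language) {A : Type u} [L.Structure A] (T : A → A → Prop) : Prop :=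
  Reflexive T ∧ Symmetric T ∧ Compatible L T

/-- `Cg R`: the smallest congruence containing `R` (intersection of all congruences ⊇ R). -/
def Cg (L : Language) {A : Type u} [L.Structure A] (R : A → A → Prop) : A → A → Prop :=
  fun a b => ∀ θ : A → A → Prop, IsCongruence L θ → (∀ x y, R x y → θ x y) → θ a b

/-- `R°`: the smallest tolerance containing `R`. -/
def tolC (L : Language) {A : Type u} [L.Structure A] (R : A → A → Prop) : A → A → Prop :=
  fun a b => ∀ T : A → A → Prop, IsTolerance L T → (∀ x y, R x y → T x y) → T a b

/-- `K(R,S;V) = {(z,w) : ∃ x y, (x,y;z,w) ∈ M(R,S) ∧ x V y}`. -/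
def Kop (L : Language) {A : Type u} [L.Structure A] (R S V : A → A → Prop) :
    A → A → Prop :=
  fun z w => ∃ x y, InM L R S x y z w ∧ V x y

/-- The join `γ ∨ D`: the smallest congruence containing both `γ` and `D`. -/
def cgJoin (L : Language) {A : Type u} [L.Structure A] (γ D : A → A → Prop) :
    A → A → Prop :=
  fun a b => ∀ θ : A → A → Prop, IsCongruence L θ → (∀ x y, γ x y → θ x y) →
    (∀ x y, D x y → θ x y) → θ a b

variable {L : Language} {A : Type u} [L.Structure A]

namespace InM

variable {R S : A → A → Prop}

lemma refl (hR : ∀ a, R a a) (x : A) : InM L R S x x x x :=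
  ⟨1, 0, Term.var (Sum.inl 0), fun _ => x, fun _ => x, Fin.elim0, Fin.elim0,
    fun _ => hR x, fun j => j.elim0, rfl, rfl, rfl, rfl⟩

lemma swap (hS : ∀ ⦃a b⦄, S a b → S b a) {x y z w : A} (h : InM L R S x y z w) :
    InM L R S y x w z := by
  obtain ⟨n, m, t, a, a', b, b', ha, hb, hx, hy, hz, hw⟩ := h
  exact ⟨n, m, t, a, a', b', b, ha, fun j => hS (hb j), hy, hx, hw, hz⟩

lemma realize {k : ℕ} (s : L.Term (Fin k)) {x y z w : Fin k → A}
    (h : ∀ i, InM L R S (x i) (y i) (z i) (w i)) :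
    InM L R S (s.realize x) (s.realize y) (s.realize z) (s.realize w) := by
  choose n m t a a' b b' ha hb hx hy hz hw using h
  -- the variables of the different `t i` are kept apart by indexing them by `Σ i, Fin (n i)`
  let e₁ := Fintype.equivFin (Σ i, Fin (n i))
  let e₂ := Fintype.equivFin (Σ i, Fin (m i))
  let glue (α : ∀ i, Fin (n i) → A) (β : ∀ i, Fin (m i) → A) : Fin _ ⊕ Fin _ → A :=
    Sum.elim (Sigma.uncurry α ∘ e₁.symm) (Sigma.uncurry β ∘ e₂.symm)
  let T := s.subst fun i => (t i).relabel (Sum.map (fun j => e₁ ⟨i, j⟩) (fun j => e₂ ⟨i, j⟩))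
  have realize_T : ∀ α β, T.realize (glue α β) =
      s.realize fun i => (t i).realize (Sum.elim (α i) (β i)) := by
    intro α β
    simp only [T, Term.realize_subst, Term.realize_relabel]
    congr 1; funext i; congr 1; funext v
    rcases v with j | j <;>
      simp only [glue, Function.comp_apply, Sum.map_inl, Sum.map_inr, Sum.elim_inl,
        Sum.elim_inr, Equiv.symm_apply_apply] <;> rfl
  refine ⟨_, _, T, Sigma.uncurry a ∘ e₁.symm, Sigma.uncurry a' ∘ e₁.symm,
    Sigma.uncurry b ∘ e₂.symm, Sigma.uncurry b' ∘ e₂.symm, fun p => ha _ _, fun q => hb _ _,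
    ?_, ?_, ?_, ?_⟩
  exacts [(funext hx ▸ realize_T a b).symm, (funext hy ▸ realize_T a b').symm,
    (funext hz ▸ realize_T a' b).symm, (funext hw ▸ realize_T a' b').symm]

end InM

section Compatible

variable {D : A → A → Prop}

lemma Compatible.transGen_update (hrefl : ∀ a, D a a) (hDc : Compatible L D) {k : ℕ}
    (f : L.Functions k) (u : Fin k → A) (i : Fin k) {c d : A} (h : Relation.TransGen D c d) :
    Relation.TransGen D (Structure.funMap f (Function.update u i c))
      (Structure.funMap f (Function.update u i d)) := by
  refine Relation.TransGen.lift (fun c => Structure.funMap f (Function.update u i c)) ?_ c d h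
  intro c d hcd
  refine hDc k f _ _ fun j => ?_
  rcases eq_or_ne j i with rfl | hj
  · simpa using hcd
  · simpa [Function.update_of_ne hj] using hrefl (u j)

lemma Compatible.transGen (hrefl : ∀ a, D a a) (hDc : Compatible L D) :
    Compatible L (Relation.TransGen D) := by
  classical
  intro k f a b hab
  suffices ∀ s : Finset (Fin k),
      Relation.TransGen D (Structure.funMap f a) (Structure.funMap f (s.piecewise b a)) by
    simpa using this Finset.univ
  intro s
  induction s using Finset.induction_on with
  | empty => simpa using Relation.TransGen.single (hrefl _)
  | insert i s hi ih =>
    refine ih.trans ?_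
    have h := hDc.transGen_update hrefl f (s.piecewise b a) i (hab i)
    rwa [← s.piecewise_eq_of_notMem b a hi, Function.update_eq_self,
      ← Finset.piecewise_insert] at h

end Compatible

def comm1Gen (L : Language) {A : Type u} [L.Structure A] (R S : A → A → Prop) :
    A → A → Prop :=
  fun z w => ∃ x, InM L R S x x z w

lemma comm1Gen_compatible (R S : A → A → Prop) : Compatible L (comm1Gen L R S) := by
  intro k f z w h
  choose x hx using h
  refine ⟨Structure.funMap f x, ?_⟩
  simpa [Term.realize] using InM.realize (Term.func f Term.var) hx

theorem stmt6 (R S : A → A → Prop) (hRrefl : Reflexive R)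
    (hS : IsTolerance L S) :
    IsCongruence L (comm1 L R S) := by
  obtain ⟨-, hSsymm, -⟩ := hS
  have hrefl : ∀ x, comm1Gen L R S x x := fun x => ⟨x, InM.refl hRrefl x⟩
  have : Std.Symm (comm1Gen L R S) := ⟨fun _ _ ⟨x, hx⟩ => ⟨x, hx.swap hSsymm⟩⟩
  exact ⟨⟨fun x => .single (hrefl x), symm (r := Relation.TransGen (comm1Gen L R S)), .trans⟩,
    (comm1Gen_compatible R S).transGen hrefl⟩
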